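/- Let H = (V, E, w) be a weighted hypergraph on n vertices and G an underlying graph of H whose Laplacian L_G has kernel exactly the span of the all-ones vector (i.e. G is connected). Let L_G⁺ be the Moore–Penrose pseudoinverse of L_G and let L_G^{+/2} be the unique symmetric positive semidefinite matrix whose square is L_G⁺. Then for every x ∈ ℝ^n with Σ_i x_i = 0, it holds that Q_H(L_G^{+/2} x) ≥ ‖x‖². -/

import Mathlib

open Matrix BigOperators

/-- The vector `δ_i - δ_j` in `ℝ^n`. -/
noncomputable def dvec {n : ℕ} (i j : Fin n) : Fin n → ℝ :=
  fun k => (if k = i then (1 : ℝ) else 0) - (if k = j then (1 : ℝ) else 0)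

/-- The rank-one matrix `(δ_i - δ_j)(δ_i - δ_j)ᵀ`, as a function of the unordered pair `{i,j}`. -/
noncomputable def edgeMat {n : ℕ} : Sym2 (Fin n) → Matrix (Fin n) (Fin n) ℝ :=
  Sym2.lift ⟨fun i j => Matrix.vecMulVec (dvec i j) (dvec i j), by
    intro i j
    ext a b
    simp [Matrix.vecMulVec_apply, dvec]
    ring⟩

/-- `M` is the Moore–Penrose pseudoinverse of `L` (the four Penrose equations). -/
def IsMP {n : ℕ} (L M : Matrix (Fin n) (Fin n) ℝ) : Prop :=
  L * M * L = L ∧ M * L * M = M ∧ (L * M)ᵀ = L * M ∧ (M * L)ᵀ = M * L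

/-- The Moore–Penrose pseudoinverse (chosen via the Penrose equations, which determine
it uniquely whenever it exists). -/
noncomputable def pinv {n : ℕ} (L : Matrix (Fin n) (Fin n) ℝ) : Matrix (Fin n) (Fin n) ℝ :=
  haveI := Classical.propDecidable (∃ M, IsMP L M)
  if h : ∃ M, IsMP L M then h.choose else 0

/-- Effective resistance `(δ_i - δ_j)ᵀ L⁺ (δ_i - δ_j)` of an unordered pair, given `L⁺`. -/
noncomputable def res {n : ℕ} (Lp : Matrix (Fin n) (Fin n) ℝ) : Sym2 (Fin n) → ℝ :=
  Sym2.lift ⟨fun i j => dvec i j ⬝ᵥ (Lp *ᵥ dvec i j), by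
    intro i j
    show dvec i j ⬝ᵥ (Lp *ᵥ dvec i j) = dvec j i ⬝ᵥ (Lp *ᵥ dvec j i)
    have h : dvec j i = -(dvec i j) := by
      funext k; simp [dvec, Pi.neg_apply]
    rw [h]
    simp [Matrix.mulVec_neg]⟩

/-- Laplacian of the weighted graph with edge set `F` and weights `c`. -/
noncomputable def lapG {n : ℕ} (F : Finset (Sym2 (Fin n))) (c : Sym2 (Fin n) → ℝ) :
    Matrix (Fin n) (Fin n) ℝ :=
  ∑ f ∈ F, c f • edgeMat f

/-- The unordered pairs of distinct vertices contained in `e`. -/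
def pairs {n : ℕ} (e : Finset (Fin n)) : Finset (Sym2 (Fin n)) :=
  e.sym2.filter fun f => ¬ f.IsDiag

/-- `Q_e(x) = max_{{i,j} ⊆ e} (x_i - x_j)²`. -/
noncomputable def Qe {n : ℕ} (x : Fin n → ℝ) (e : Finset (Fin n)) : ℝ :=
  ⨆ i ∈ e, ⨆ j ∈ e, (x i - x j) ^ 2

/-- The hypergraph energy `Q_H(x) = Σ_e w_e Q_e(x)`. -/
noncomputable def QH {n : ℕ} (E : Finset (Finset (Fin n))) (w : Finset (Fin n) → ℝ)
    (x : Fin n → ℝ) : ℝ :=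
  ∑ e ∈ E, w e * Qe x e

/-- Laplacian of the underlying (multi)graph of a hypergraph with weights `c e f`. -/
noncomputable def lapU {n : ℕ} (E : Finset (Finset (Fin n)))
    (c : Finset (Fin n) → Sym2 (Fin n) → ℝ) : Matrix (Fin n) (Fin n) ℝ :=
  ∑ e ∈ E, ∑ f ∈ pairs e, c e f • edgeMat f

-- AUX START
lemma edgeMat_mk {n : ℕ} (i j : Fin n) :
    edgeMat s(i,j) = Matrix.vecMulVec (dvec i j) (dvec i j) := rfl

lemma dvec_dot {n : ℕ} (i j : Fin n) (v : Fin n → ℝ) : dvec i j ⬝ᵥ v = v i - v j := by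
  simp [dvec, dotProduct, sub_mul, Finset.sum_sub_distrib]

lemma quad_edgeMat {n : ℕ} (i j : Fin n) (u : Fin n → ℝ) :
    u ⬝ᵥ (edgeMat s(i,j) *ᵥ u) = (u i - u j)^2 := by
  rw [edgeMat_mk]
  have h1 : Matrix.vecMulVec (dvec i j) (dvec i j) *ᵥ u = (dvec i j ⬝ᵥ u) • dvec i j := by
    ext k
    simp only [Matrix.mulVec, Matrix.vecMulVec_apply, dotProduct, Pi.smul_apply,
      smul_eq_mul, Finset.sum_mul]
    exact Finset.sum_congr rfl fun x _ => by ring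
  rw [h1, dotProduct_smul, smul_eq_mul, dotProduct_comm u (dvec i j),
    dvec_dot, sq]

lemma edgeMat_symm {n : ℕ} (f : Sym2 (Fin n)) : (edgeMat f)ᵀ = edgeMat f := by
  induction f using Sym2.ind with
  | _ i j =>
    rw [edgeMat_mk]
    ext a b
    simp [Matrix.vecMulVec_apply, Matrix.transpose_apply, mul_comm]

lemma lapU_symm {n : ℕ} (E : Finset (Finset (Fin n)))
    (c : Finset (Fin n) → Sym2 (Fin n) → ℝ) : (lapU E c)ᵀ = lapU E c := by
  unfold lapU
  rw [Matrix.transpose_sum]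
  refine Finset.sum_congr rfl fun e _ => ?_
  rw [Matrix.transpose_sum]
  refine Finset.sum_congr rfl fun f _ => ?_
  rw [Matrix.transpose_smul, edgeMat_symm]

lemma isMP_unique {n : ℕ} (L M N : Matrix (Fin n) (Fin n) ℝ)
    (hM : IsMP L M) (hN : IsMP L N) : M = N := by
  obtain ⟨hM1, hM2, hM3, hM4⟩ := hM
  obtain ⟨hN1, hN2, hN3, hN4⟩ := hN
  have hLM : L * M = L * N := by
    calc L * M = (L * M)ᵀ := hM3.symm
      _ = Mᵀ * Lᵀ := Matrix.transpose_mul _ _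
      _ = Mᵀ * (L * N * L)ᵀ := by rw [hN1]
      _ = Mᵀ * (Lᵀ * (L * N)ᵀ) := by rw [Matrix.transpose_mul (L * N) L]
      _ = Mᵀ * (Lᵀ * (L * N)) := by rw [hN3]
      _ = (Mᵀ * Lᵀ) * (L * N) := by rw [Matrix.mul_assoc]
      _ = (L * M)ᵀ * (L * N) := by rw [← Matrix.transpose_mul]
      _ = (L * M) * (L * N) := by rw [hM3]
      _ = (L * M * L) * N := by simp only [Matrix.mul_assoc]
      _ = L * N := by rw [hM1]
  have hML : M * L = N * L := by
    calc M * L = (M * L)ᵀ := hM4.symm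
      _ = Lᵀ * Mᵀ := Matrix.transpose_mul _ _
      _ = (L * N * L)ᵀ * Mᵀ := by rw [hN1]
      _ = (L * (N * L))ᵀ * Mᵀ := by rw [Matrix.mul_assoc]
      _ = ((N * L)ᵀ * Lᵀ) * Mᵀ := by rw [Matrix.transpose_mul]
      _ = ((N * L) * Lᵀ) * Mᵀ := by rw [hN4]
      _ = (N * L) * (Lᵀ * Mᵀ) := by rw [Matrix.mul_assoc]
      _ = (N * L) * (M * L)ᵀ := by rw [← Matrix.transpose_mul]
      _ = (N * L) * (M * L) := by rw [hM4]
      _ = N * (L * M * L) := by simp only [Matrix.mul_assoc]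
      _ = N * L := by rw [hM1]
  calc M = M * L * M := hM2.symm
    _ = M * (L * M) := by rw [Matrix.mul_assoc]
    _ = M * (L * N) := by rw [hLM]
    _ = (M * L) * N := by rw [Matrix.mul_assoc]
    _ = (N * L) * N := by rw [hML]
    _ = N := hN2

lemma le_Qe {n : ℕ} (x : Fin n → ℝ) (e : Finset (Fin n)) {i j : Fin n}
    (hi : i ∈ e) (hj : j ∈ e) : (x i - x j)^2 ≤ Qe x e := by
  have bdd : ∀ (g : Fin n → ℝ), BddAbove (Set.range g) :=
    fun g => Set.Finite.bddAbove (Set.finite_range g)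
  have bddp : ∀ (p : Prop) (g : p → ℝ), BddAbove (Set.range g) :=
    fun p g => Set.Finite.bddAbove (Set.finite_range g)
  show (x i - x j)^2 ≤ ⨆ i ∈ e, ⨆ j ∈ e, (x i - x j) ^ 2
  calc (x i - x j)^2 ≤ ⨆ (_ : j ∈ e), (x i - x j)^2 :=
        le_ciSup (f := fun _ : j ∈ e => (x i - x j)^2) (bddp _ _) hj
    _ ≤ ⨆ j ∈ e, (x i - x j)^2 :=
        le_ciSup (f := fun j => ⨆ (_ : j ∈ e), (x i - x j)^2) (bdd _) j
    _ ≤ ⨆ (_ : i ∈ e), ⨆ j ∈ e, (x i - x j)^2 :=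
        le_ciSup (f := fun _ : i ∈ e => ⨆ j ∈ e, (x i - x j)^2) (bddp _ _) hi
    _ ≤ ⨆ i ∈ e, ⨆ j ∈ e, (x i - x j)^2 :=
        le_ciSup (f := fun i => ⨆ (_ : i ∈ e), ⨆ j ∈ e, (x i - x j)^2) (bdd _) i

lemma sum_mulVec' {n : ℕ} {ι : Type*} (s : Finset ι) (A : ι → Matrix (Fin n) (Fin n) ℝ)
    (v : Fin n → ℝ) : (∑ i ∈ s, A i) *ᵥ v = ∑ i ∈ s, A i *ᵥ v :=
  map_sum (Matrix.mulVec.addMonoidHomLeft v) A s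

lemma dot_sum' {n : ℕ} {ι : Type*} (s : Finset ι) (u : Fin n → ℝ) (f : ι → (Fin n → ℝ)) :
    u ⬝ᵥ (∑ i ∈ s, f i) = ∑ i ∈ s, u ⬝ᵥ f i := by
  induction s using Finset.cons_induction with
  | empty => simp
  | cons a s ha ih => simp [Finset.sum_cons, dotProduct_add, ih]

lemma quad_lapU {n : ℕ} (E : Finset (Finset (Fin n)))
    (c : Finset (Fin n) → Sym2 (Fin n) → ℝ) (u : Fin n → ℝ) :
    u ⬝ᵥ (lapU E c *ᵥ u) = ∑ e ∈ E, ∑ f ∈ pairs e, c e f * (u ⬝ᵥ (edgeMat f *ᵥ u)) := by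
  unfold lapU
  rw [sum_mulVec', dot_sum']
  refine Finset.sum_congr rfl fun e _ => ?_
  rw [sum_mulVec', dot_sum']
  refine Finset.sum_congr rfl fun f _ => ?_
  rw [Matrix.smul_mulVec, dotProduct_smul, smul_eq_mul]

lemma quad_le_QH {n : ℕ} (E : Finset (Finset (Fin n))) (w : Finset (Fin n) → ℝ)
    (c : Finset (Fin n) → Sym2 (Fin n) → ℝ)
    (hc : ∀ e ∈ E, ∀ f ∈ pairs e, 0 ≤ c e f)
    (hsum : ∀ e ∈ E, ∑ f ∈ pairs e, c e f = w e)
    (u : Fin n → ℝ) : u ⬝ᵥ (lapU E c *ᵥ u) ≤ QH E w u := by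
  rw [quad_lapU]
  unfold QH
  refine Finset.sum_le_sum fun e he => ?_
  calc ∑ f ∈ pairs e, c e f * (u ⬝ᵥ (edgeMat f *ᵥ u))
      ≤ ∑ f ∈ pairs e, c e f * Qe u e := by
        refine Finset.sum_le_sum fun f hf => ?_
        induction f using Sym2.ind with
        | _ i j =>
          rw [quad_edgeMat]
          refine mul_le_mul_of_nonneg_left ?_ (hc e he _ hf)
          rw [pairs, Finset.mem_filter, Finset.mk_mem_sym2_iff] at hf
          exact le_Qe u e hf.1.1 hf.1.2
    _ = w e * Qe u e := by rw [← Finset.sum_mul, hsum e he]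


/-- Let `H = (V, E, w)` be a weighted hypergraph on `n` vertices and `G` a connected
underlying graph of `H` (kernel of `L_G` is exactly the span of the all-ones vector).
Let `L_G⁺` be the Moore–Penrose pseudoinverse of `L_G` and `L_G^{+/2}` the symmetric
positive semidefinite square root of `L_G⁺`.  Then for every `x ∈ ℝⁿ` with `Σ_i x_i = 0`,
`Q_H(L_G^{+/2} x) ≥ ‖x‖²`. -/
theorem energy_pinv_sqrt_ge_norm_sq (n : ℕ) (E : Finset (Finset (Fin n)))
    (w : Finset (Fin n) → ℝ)
    (hcard : ∀ e ∈ E, 2 ≤ e.card) (hw : ∀ e ∈ E, 0 ≤ w e)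
    (c : Finset (Fin n) → Sym2 (Fin n) → ℝ)
    (hc : ∀ e ∈ E, ∀ f ∈ pairs e, 0 ≤ c e f)
    (hsum : ∀ e ∈ E, ∑ f ∈ pairs e, c e f = w e)
    (hker : ∀ x : Fin n → ℝ, lapU E c *ᵥ x = 0 ↔ ∃ t : ℝ, x = fun _ => t)
    (Lp : Matrix (Fin n) (Fin n) ℝ) (hLp : IsMP (lapU E c) Lp)
    (Lph : Matrix (Fin n) (Fin n) ℝ) (hLph : Lph.PosSemidef) (hsq : Lph * Lph = Lp) :
    ∀ x : Fin n → ℝ, (∑ i, x i) = 0 → (∑ i, (x i) ^ 2) ≤ QH E w (Lph *ᵥ x) := by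
  intro x hx
  set L := lapU E c with hLdef
  obtain ⟨h1, h2, h3, h4⟩ := hLp
  have hmove : ∀ (A : Matrix (Fin n) (Fin n) ℝ), Aᵀ = A → ∀ v w : Fin n → ℝ,
      v ⬝ᵥ (A *ᵥ w) = (A *ᵥ v) ⬝ᵥ w := by
    intro A h v w
    rw [Matrix.dotProduct_mulVec, ← h, Matrix.vecMul_transpose, h]
  have hLsym : Lᵀ = L := lapU_symm E c
  have hLphsym : Lphᵀ = Lph := by
    have := hLph.1
    exact (by simpa using this : Lph.IsSymm).eq
  have hLpsym : Lpᵀ = Lp := by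
    refine isMP_unique L Lpᵀ Lp ?_ ⟨h1, h2, h3, h4⟩
    refine ⟨?_, ?_, ?_, ?_⟩
    · calc L * Lpᵀ * L = (Lᵀ * Lp * Lᵀ)ᵀ := by
            simp only [Matrix.transpose_mul, Matrix.transpose_transpose, Matrix.mul_assoc]
        _ = (L * Lp * L)ᵀ := by rw [hLsym]
        _ = Lᵀ := by rw [h1]
        _ = L := hLsym
    · calc Lpᵀ * L * Lpᵀ = (Lp * Lᵀ * Lp)ᵀ := by
            simp only [Matrix.transpose_mul, Matrix.transpose_transpose, Matrix.mul_assoc]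
        _ = (Lp * L * Lp)ᵀ := by rw [hLsym]
        _ = Lpᵀ := by rw [h2]
    · calc (L * Lpᵀ)ᵀ = Lp * Lᵀ := by
            simp only [Matrix.transpose_mul, Matrix.transpose_transpose]
        _ = Lp * L := by rw [hLsym]
        _ = (Lp * L)ᵀ := h4.symm
        _ = Lᵀ * Lpᵀ := Matrix.transpose_mul _ _
        _ = L * Lpᵀ := by rw [hLsym]
    · calc (Lpᵀ * L)ᵀ = Lᵀ * Lp := by
            simp only [Matrix.transpose_mul, Matrix.transpose_transpose]
        _ = L * Lp := by rw [hLsym]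
        _ = (L * Lp)ᵀ := h3.symm
        _ = Lpᵀ * Lᵀ := Matrix.transpose_mul _ _
        _ = Lpᵀ * L := by rw [hLsym]
  have hcomm : Lp * L = L * Lp := by
    rw [← h4, Matrix.transpose_mul, hLsym, hLpsym]
  have hone : L *ᵥ (fun _ => (1:ℝ)) = 0 := (hker _).mpr ⟨1, rfl⟩
  have hdotsum : ∀ v : Fin n → ℝ, (∑ i, v i) = (fun _ => (1:ℝ)) ⬝ᵥ v := by
    intro v; simp [dotProduct]
  have hfix : ∀ v : Fin n → ℝ, (∑ i, v i) = 0 → Lp *ᵥ (L *ᵥ v) = v := by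
    intro v hv
    set z := v - Lp *ᵥ (L *ᵥ v) with hzdef
    have hLz : L *ᵥ z = 0 := by
      rw [hzdef, Matrix.mulVec_sub, Matrix.mulVec_mulVec, Matrix.mulVec_mulVec, h1, sub_self]
    obtain ⟨t, hzt⟩ := (hker z).mp hLz
    have hzz : z ⬝ᵥ z = 0 := by
      have hd1 : z ⬝ᵥ v = 0 := by
        rw [hzt]
        simp [dotProduct, ← Finset.mul_sum, hv]
      have hd2 : z ⬝ᵥ (Lp *ᵥ (L *ᵥ v)) = 0 := by
        rw [Matrix.mulVec_mulVec, hmove _ h4, ← Matrix.mulVec_mulVec, hLz,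
          Matrix.mulVec_zero, zero_dotProduct]
      calc z ⬝ᵥ z = z ⬝ᵥ v - z ⬝ᵥ (Lp *ᵥ (L *ᵥ v)) := by
            rw [hzdef]
            exact dotProduct_sub z _ _
        _ = 0 := by rw [hd1, hd2, sub_zero]
    have hz0 : z = 0 := dotProduct_self_eq_zero.mp hzz
    have : v - Lp *ᵥ (L *ᵥ v) = 0 := by rw [← hzdef]; exact hz0
    exact (sub_eq_zero.mp this).symm
  have hLpone : Lp *ᵥ (fun _ => (1:ℝ)) = 0 := by
    have hLpe : Lp = Lp * Lp * L := by
      calc Lp = Lp * L * Lp := h2.symm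
        _ = Lp * (L * Lp) := by rw [Matrix.mul_assoc]
        _ = Lp * (Lp * L) := by rw [← hcomm]
        _ = Lp * Lp * L := by rw [Matrix.mul_assoc]
    rw [hLpe, ← Matrix.mulVec_mulVec, hone, Matrix.mulVec_zero]
  have hLphone : Lph *ᵥ (fun _ => (1:ℝ)) = 0 := by
    apply dotProduct_self_eq_zero.mp
    have key : (Lph *ᵥ (fun _ => (1:ℝ))) ⬝ᵥ (Lph *ᵥ (fun _ => (1:ℝ)))
        = (fun _ => (1:ℝ)) ⬝ᵥ (Lp *ᵥ (fun _ => (1:ℝ))) := by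
      rw [← hmove Lph hLphsym, Matrix.mulVec_mulVec, hsq]
    rw [key, hLpone, dotProduct_zero]
  set u := Lph *ᵥ x with hudef
  have hsumu : (∑ i, u i) = 0 := by
    rw [hdotsum, hudef, hmove Lph hLphsym, hLphone, zero_dotProduct]
  have hfixu : Lp *ᵥ (L *ᵥ u) = u := hfix u hsumu
  set z := Lph *ᵥ (L *ᵥ u) - x with hzdef
  have hLphz : Lph *ᵥ z = 0 := by
    rw [hzdef, Matrix.mulVec_sub, Matrix.mulVec_mulVec (L *ᵥ u) Lph Lph, hsq, hfixu,
      ← hudef, sub_self]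
  have hsumz : (∑ i, z i) = 0 := by
    rw [hdotsum, hzdef, dotProduct_sub, hmove Lph hLphsym, hLphone,
      zero_dotProduct, ← hdotsum, hx, sub_zero]
  have hLpz : Lp *ᵥ z = 0 := by
    rw [← hsq, ← Matrix.mulVec_mulVec, hLphz, Matrix.mulVec_zero]
  have hz0 : z = 0 := by
    have hzfix : Lp *ᵥ (L *ᵥ z) = z := hfix z hsumz
    calc z = Lp *ᵥ (L *ᵥ z) := hzfix.symm
      _ = (Lp * L) *ᵥ z := Matrix.mulVec_mulVec z Lp L
      _ = (L * Lp) *ᵥ z := by rw [hcomm]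
      _ = L *ᵥ (Lp *ᵥ z) := (Matrix.mulVec_mulVec z L Lp).symm
      _ = 0 := by rw [hLpz, Matrix.mulVec_zero]
  have hMx : Lph *ᵥ (L *ᵥ u) = x := by
    have hsub : Lph *ᵥ (L *ᵥ u) - x = 0 := by rw [← hzdef]; exact hz0
    exact sub_eq_zero.mp hsub
  calc (∑ i, x i ^ 2) = x ⬝ᵥ x := by simp [dotProduct, sq]
    _ = x ⬝ᵥ (Lph *ᵥ (L *ᵥ u)) := by rw [hMx]
    _ = (Lph *ᵥ x) ⬝ᵥ (L *ᵥ u) := hmove Lph hLphsym x _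
    _ = u ⬝ᵥ (L *ᵥ u) := by rw [← hudef]
    _ ≤ QH E w u := quad_le_QH E w c hc hsum u
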